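/- Let θ > 0 be a real number. There exist a real ν₀ > 0 and an integer p₀, both depending only on θ, with the following property. For every prime p ≥ p₀ and every subgroup H of 𝔽_p^×, there exist a real ν with ν₀ ≤ ν < θ/2 and an integer k ≥ 1 such that, setting f(a) = (1/|H|)·∑_{s∈H} e(as/p), Λ_ν = {a ∈ 𝔽_p : |f(a)| > p^{−ν}}, M = ∑_{a∈𝔽_p} |f(a)|^{4k}, and ρ_k(x) = |H|^{−2k}·#{(s₁,…,s_{2k}) ∈ H^{2k} : s₁ − s₂ + ⋯ + s_{2k−1} − s_{2k} = x} for x ∈ 𝔽_p, the following two estimates hold: (i) p^{−1−θ}·|Λ_ν| ≤ M/p ≤ p^{−1+θ}·|Λ_ν|; (ii) (1/M)·∑_{x∈𝔽_p} ∑_{a∈𝔽_p} ρ_k(x)·|f(a)|^{4k}·|f(ax)|^{4k} ≥ p^{−10θ}. -/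

import Mathlib

/-- `eChar p x` is `e(x/p) = exp(2πi x̃/p)` where `x̃` is the integer representative of `x`. -/
noncomputable def eChar (p : ℕ) (x : ZMod p) : ℂ :=
  Complex.exp (2 * Real.pi * Complex.I * (x.val : ℂ) / p)

/-!
Write `F = |f|`. Since `f` is invariant under multiplication by `H` and the characteristic
function of the walk is `|f|^{2k}`, one has `∑ₓ ρ_k(x) f(ax) = |f(a)|^{2k}`; by Jensen,
`F(a)^{8k²} ≤ ∑ₓ ρ_k(x) F(ax)^{4k}`, so the double sum in (ii) is at least `∑ₐ F(a)^{4k+8k²}`.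

Along scales `ν₀ > ν₁ > ⋯ > ν_J` with `ν_{i+1} = 4θν_i²` the level sets `Λ_{ν_i}` shrink, and
`1 ≤ |Λ| ≤ p` forces a step with `|Λ_{ν_i}| ≤ p^{θ/2} |Λ_{ν_{i+1}}|`. For `ν = ν_i` and
`k ≈ 1/(4ν)`, the points outside `Λ_ν` contribute at most `p · p^{-4kν} ≤ 1` to `M`, while
`Λ_{ν_{i+1}}` contributes at least `p^{-θ/2} |Λ_{ν_{i+1}}|`; this squeezes `M` between
`p^{-θ} |Λ_ν|` and `p^{θ} |Λ_ν|` and gives (ii) as well.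
-/

open Finset ComplexConjugate

lemma AddChar.map_sum_eq_prod {A M ι : Type*} [AddCommMonoid A] [CommMonoid M]
    (ψ : AddChar A M) (s : Finset ι) (f : ι → A) : ψ (∑ i ∈ s, f i) = ∏ i ∈ s, ψ (f i) := by
  classical
  induction s using Finset.induction_on with
  | empty => simp
  | insert i s hi ih => rw [sum_insert hi, prod_insert hi, ψ.map_add_eq_mul, ih]

lemma prod_fin_two_mul_neg_one_pow {S M : Type*} [Monoid S] [HasDistribNeg S] [CommMonoid M]
    (g : S → M) (k : ℕ) : ∏ i : Fin (2 * k), g ((-1) ^ (i : ℕ)) = (g 1 * g (-1)) ^ k := by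
  rw [Fin.prod_univ_eq_prod_range (fun i => g ((-1) ^ i))]
  induction k with
  | zero => simp
  | succ k ih =>
    rw [show 2 * (k + 1) = 2 * k + 1 + 1 by ring, prod_range_succ, prod_range_succ, ih,
      pow_succ, pow_succ, (even_two_mul k).neg_one_pow, one_mul, mul_assoc]

lemma sum_card_fiber_smul {α β M : Type*} [Fintype α] [Fintype β] [DecidableEq β]
    [AddCommMonoid M] (A : α → β) (g : β → M) :
    ∑ x, Nat.card {s // A s = x} • g x = ∑ s, g (A s) := by
  simp [← Fintype.sum_fiberwise' A g, Nat.card_eq_fintype_card]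

lemma exists_le_mul_succ_of_lt_pow {h : ℕ → ℝ} {c : ℝ} (hc : 0 ≤ c) {J : ℕ} (hJ : 1 ≤ h J)
    (h0 : h 0 < c ^ J) : ∃ i < J, h i ≤ c * h (i + 1) := by
  by_contra! hlt
  have hdecay : ∀ j ≤ J, c ^ j * h j ≤ h 0 := by
    intro j hj
    induction j with
    | zero => simp
    | succ j ih =>
      calc c ^ (j + 1) * h (j + 1) = c ^ j * (c * h (j + 1)) := by ring
        _ ≤ c ^ j * h j := by gcongr; exact (hlt j (by omega)).le
        _ ≤ h 0 := ih (by omega)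
  have hcJ : c ^ J ≤ c ^ J * h J := le_mul_of_one_le_right (by positivity) hJ
  linarith [hdecay J le_rfl]

section CharAvg

variable {R : Type*} [CommRing R] (ψ : AddChar R ℂ) (H : Subgroup Rˣ) [Fintype H]

noncomputable def charAvg (a : R) : ℂ := (Nat.card H : ℂ)⁻¹ * ∑ s : H, ψ (a * (s : Rˣ))

lemma charAvg_zero : charAvg ψ H 0 = 1 := by
  simp [charAvg, Nat.card_eq_fintype_card]

lemma charAvg_mul_of_mem {t : Rˣ} (ht : t ∈ H) (a : R) : charAvg ψ H (a * t) = charAvg ψ H a := by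
  rw [charAvg, charAvg, Fintype.sum_equiv (Equiv.mulLeft (⟨t, ht⟩ : H)) _
    (fun s : H => ψ (a * (s : Rˣ))) fun s => by simp [mul_assoc]]

variable [Finite R]

lemma norm_charAvg_le_one (a : R) : ‖charAvg ψ H a‖ ≤ 1 := by
  rw [charAvg, norm_mul, norm_inv, Complex.norm_natCast, inv_mul_le_one₀ (mod_cast Nat.card_pos)]
  refine (norm_sum_le _ _).trans ?_
  simp [Nat.card_eq_fintype_card]

lemma charAvg_neg (a : R) : charAvg ψ H (-a) = conj (charAvg ψ H a) := by
  simp [charAvg, AddChar.map_neg_eq_conj, map_sum]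

end CharAvg

section Walk

variable {R : Type*} [CommRing R] (H : Subgroup Rˣ)

def altSum {n : ℕ} (s : Fin n → H) : R := ∑ i : Fin n, (-1) ^ (i : ℕ) * ((s i : Rˣ) : R)

noncomputable def walkDensity (k : ℕ) (x : R) : ℝ :=
  Nat.card {s : Fin (2 * k) → H // altSum H s = x} / (Nat.card H : ℝ) ^ (2 * k)

lemma walkDensity_nonneg (k : ℕ) (x : R) : 0 ≤ walkDensity H k x := by
  unfold walkDensity; positivity

variable [Fintype R] [Fintype H] (ψ : AddChar R ℂ)

lemma sum_addChar_mul_altSum (b : R) (k : ℕ) :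
    ∑ s : Fin (2 * k) → H, ψ (b * altSum H s) =
      ((Nat.card H : ℂ) ^ 2 * (‖charAvg ψ H b‖ ^ 2 : ℝ)) ^ k := by
  have hfactor (c : R) : ∑ u : H, ψ (b * (c * (u : Rˣ))) = Nat.card H * charAvg ψ H (c * b) := by
    rw [charAvg, ← mul_assoc, mul_inv_cancel₀ (mod_cast Nat.card_pos.ne'), one_mul]
    simp only [mul_comm, mul_left_comm]
  simp_rw [altSum, mul_sum, ψ.map_sum_eq_prod]
  rw [← Fintype.prod_sum (fun (i : Fin (2 * k)) (u : H) => ψ (b * ((-1) ^ (i : ℕ) * (u : Rˣ))))]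
  simp_rw [hfactor]
  rw [prod_fin_two_mul_neg_one_pow (fun c => (Nat.card H : ℂ) * charAvg ψ H (c * b))]
  simp only [one_mul, neg_one_mul, charAvg_neg, Complex.ofReal_pow]
  rw [mul_mul_mul_comm, Complex.mul_conj, Complex.normSq_eq_norm_sq, sq]
  push_cast; ring

lemma sum_walkDensity_mul_charAvg (k : ℕ) (a : R) :
    ∑ x, (walkDensity H k x : ℂ) * charAvg ψ H (a * x) = (‖charAvg ψ H a‖ ^ (2 * k) : ℝ) := by
  classical
  have hcard : (Nat.card H : ℂ) ≠ 0 := mod_cast Nat.card_pos.ne'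
  have hfiber := sum_card_fiber_smul (altSum (n := 2 * k) H) (fun x => charAvg ψ H (a * x))
  simp only [nsmul_eq_mul] at hfiber
  calc ∑ x, (walkDensity H k x : ℂ) * charAvg ψ H (a * x)
      = ((Nat.card H : ℂ) ^ (2 * k))⁻¹ * ∑ s : Fin (2 * k) → H, charAvg ψ H (a * altSum H s) := by
        rw [← hfiber, mul_sum]
        refine sum_congr rfl fun x _ => ?_
        simp only [walkDensity, Complex.ofReal_div, Complex.ofReal_natCast, Complex.ofReal_pow]
        ring
    _ = ((Nat.card H : ℂ) ^ (2 * k))⁻¹ * ((Nat.card H : ℂ)⁻¹ *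
          ∑ t : H, ∑ s : Fin (2 * k) → H, ψ ((a * (t : Rˣ)) * altSum H s)) := by
        simp only [charAvg, mul_sum, sum_comm (γ := H), mul_right_comm a]
    _ = (‖charAvg ψ H a‖ ^ (2 * k) : ℝ) := by
        simp only [sum_addChar_mul_altSum, charAvg_mul_of_mem ψ H (SetLike.coe_mem _), sum_const,
          card_univ, ← Nat.card_eq_fintype_card, nsmul_eq_mul]
        field_simp
        push_cast; ring

lemma sum_walkDensity (k : ℕ) : ∑ x, walkDensity H k x = 1 := by
  have h := sum_walkDensity_mul_charAvg H (0 : AddChar R ℂ) k 0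
  simp only [zero_mul, charAvg_zero, mul_one, norm_one, one_pow] at h
  exact_mod_cast h

lemma norm_charAvg_pow_le (k n : ℕ) (a : R) :
    ‖charAvg ψ H a‖ ^ (2 * k * n) ≤ ∑ x, walkDensity H k x * ‖charAvg ψ H (a * x)‖ ^ n := by
  have hmean : ‖charAvg ψ H a‖ ^ (2 * k) ≤ ∑ x, walkDensity H k x * ‖charAvg ψ H (a * x)‖ := by
    calc ‖charAvg ψ H a‖ ^ (2 * k)
        = ‖∑ x, (walkDensity H k x : ℂ) * charAvg ψ H (a * x)‖ := by
          rw [sum_walkDensity_mul_charAvg, Complex.norm_real, Real.norm_of_nonneg (by positivity)]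
      _ ≤ ∑ x, walkDensity H k x * ‖charAvg ψ H (a * x)‖ := by
          refine (norm_sum_le _ _).trans_eq (sum_congr rfl fun x _ => ?_)
          rw [norm_mul, Complex.norm_real, Real.norm_of_nonneg (walkDensity_nonneg H k x)]
  calc ‖charAvg ψ H a‖ ^ (2 * k * n)
      = (‖charAvg ψ H a‖ ^ (2 * k)) ^ n := pow_mul _ _ _
    _ ≤ (∑ x, walkDensity H k x * ‖charAvg ψ H (a * x)‖) ^ n :=
        pow_le_pow_left₀ (by positivity) hmean n
    _ ≤ ∑ x, walkDensity H k x * ‖charAvg ψ H (a * x)‖ ^ n :=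
        Real.pow_arith_mean_le_arith_mean_pow univ _ _ (fun x _ => walkDensity_nonneg H k x)
          (sum_walkDensity H k) (fun _ _ => norm_nonneg _) n

lemma sum_norm_charAvg_pow_le (k n : ℕ) :
    ∑ a, ‖charAvg ψ H a‖ ^ (n + 2 * k * n) ≤
      ∑ x, ∑ a, walkDensity H k x * ‖charAvg ψ H a‖ ^ n * ‖charAvg ψ H (a * x)‖ ^ n := by
  rw [sum_comm]
  refine sum_le_sum fun a _ => ?_
  calc ‖charAvg ψ H a‖ ^ (n + 2 * k * n)
      = ‖charAvg ψ H a‖ ^ n * ‖charAvg ψ H a‖ ^ (2 * k * n) := pow_add _ _ _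
    _ ≤ ‖charAvg ψ H a‖ ^ n * ∑ x, walkDensity H k x * ‖charAvg ψ H (a * x)‖ ^ n := by
        gcongr; exact norm_charAvg_pow_le H ψ k n a
    _ = ∑ x, walkDensity H k x * ‖charAvg ψ H a‖ ^ n * ‖charAvg ψ H (a * x)‖ ^ n := by
        rw [mul_sum]; exact sum_congr rfl fun x _ => by ring

end Walk

section LevelSet

variable {α : Type*} [Fintype α]

open scoped Classical in
noncomputable def levelSet (F : α → ℝ) (t : ℝ) : Finset α := univ.filter fun a => t < F a

variable {F : α → ℝ}

lemma ncard_setOf_lt (t : ℝ) : {a | t < F a}.ncard = #(levelSet F t) := by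
  rw [levelSet, ← Set.ncard_coe_finset, coe_filter]
  simp

lemma one_le_card_levelSet {a : α} {t : ℝ} (ha : t < F a) : 1 ≤ #(levelSet F t) :=
  card_pos.2 ⟨a, by simpa [levelSet] using ha⟩

lemma card_levelSet_le_rpow (hF : ∀ a, 0 ≤ F a) {P : ℝ} (hP : 0 < P) (ν : ℝ) (n : ℕ) :
    #(levelSet F (P ^ (-ν))) * P ^ (-ν * n) ≤ ∑ a, F a ^ n := by
  rw [Real.rpow_mul_natCast hP.le]
  calc #(levelSet F (P ^ (-ν))) * (P ^ (-ν)) ^ n = ∑ a ∈ levelSet F (P ^ (-ν)), (P ^ (-ν)) ^ n := by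
        rw [sum_const, nsmul_eq_mul]
    _ ≤ ∑ a ∈ levelSet F (P ^ (-ν)), F a ^ n := by
        refine sum_le_sum fun a ha => pow_le_pow_left₀ (by positivity) ?_ n
        exact (by simpa [levelSet] using ha : P ^ (-ν) < F a).le
    _ ≤ ∑ a, F a ^ n := sum_le_univ_sum_of_nonneg fun a => pow_nonneg (hF a) n

lemma sum_pow_le_card_levelSet_add_one (hF0 : ∀ a, 0 ≤ F a) (hF1 : ∀ a, F a ≤ 1) {P ν : ℝ}
    (hP : 1 < P) (hcard : Fintype.card α ≤ P) {n : ℕ} (hn : 1 ≤ n * ν) :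
    ∑ a, F a ^ n ≤ #(levelSet F (P ^ (-ν))) + 1 := by
  classical
  rw [← sum_filter_add_sum_filter_not univ (fun a => P ^ (-ν) < F a)]
  gcongr
  · calc ∑ a ∈ univ.filter (fun a => P ^ (-ν) < F a), F a ^ n
        ≤ ∑ a ∈ univ.filter (fun a => P ^ (-ν) < F a), 1 :=
          sum_le_sum fun a _ => pow_le_one₀ (hF0 a) (hF1 a)
      _ = #(levelSet F (P ^ (-ν))) := by simp [levelSet]
  · calc ∑ a ∈ univ.filter (fun a => ¬ P ^ (-ν) < F a), F a ^ n
        ≤ ∑ a ∈ univ.filter (fun a => ¬ P ^ (-ν) < F a), (P ^ (-ν)) ^ n :=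
          sum_le_sum fun a ha => pow_le_pow_left₀ (hF0 a) (not_lt.1 (mem_filter.1 ha).2) n
      _ ≤ ∑ _a : α, (P ^ (-ν)) ^ n := sum_le_univ_sum_of_nonneg fun _ => by positivity
      _ = Fintype.card α * P ^ (-ν * n) := by
          rw [sum_const, card_univ, nsmul_eq_mul, Real.rpow_mul_natCast (by positivity)]
      _ ≤ P * P ^ (-ν * n) := by gcongr
      _ = P ^ (1 + -ν * n) := by rw [Real.rpow_add (by positivity), Real.rpow_one]
      _ ≤ 1 := Real.rpow_le_one_of_one_le_of_nonpos hP.le (by linarith)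

end LevelSet

/-- The relation `ν_{i+1} = 4θν_i²` is what makes `(4k + 8k²) ν_{i+1} ≤ 9θ` once `k ≈ 1/(4ν_i)`. -/
noncomputable def peakingScale (θ : ℝ) : ℕ → ℝ
  | 0 => θ / 4
  | i + 1 => 4 * θ * peakingScale θ i ^ 2

section PeakingScale

variable {θ : ℝ}

lemma peakingScale_pos (hθ : 0 < θ) : ∀ i, 0 < peakingScale θ i
  | 0 => by simp [peakingScale]; positivity
  | i + 1 => by have := peakingScale_pos hθ i; simp only [peakingScale]; positivity

lemma peakingScale_le (hθ : 0 < θ) (hθ1 : θ ≤ 1) : ∀ i, peakingScale θ i ≤ θ / 4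
  | 0 => le_rfl
  | i + 1 => by
    have h0 := peakingScale_pos hθ i
    have h1 := peakingScale_le hθ hθ1 i
    simp only [peakingScale]
    nlinarith [mul_le_mul_of_nonneg_left h1 (by positivity : 0 ≤ 4 * θ * peakingScale θ i)]

lemma peakingScale_antitone (hθ : 0 < θ) (hθ1 : θ ≤ 1) : Antitone (peakingScale θ) :=
  antitone_nat_of_succ_le fun i => by
    have h0 := peakingScale_pos hθ i
    have h1 := peakingScale_le hθ hθ1 i
    simp only [peakingScale]
    nlinarith [mul_le_mul_of_nonneg_left h1 (by positivity : 0 ≤ 4 * θ * peakingScale θ i)]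

end PeakingScale

lemma exists_nat_one_le_four_mul_le {ν : ℝ} (hν : 0 < ν) (hν4 : ν ≤ 1 / 4) :
    ∃ k : ℕ, 1 ≤ k ∧ 1 ≤ 4 * k * ν ∧ 2 * k * ν ≤ 1 := by
  refine ⟨⌈(4 * ν)⁻¹⌉₊, Nat.one_le_ceil_iff.2 (by positivity), ?_, ?_⟩
  · have := Nat.le_ceil (4 * ν)⁻¹
    rw [inv_le_iff_one_le_mul₀' (by positivity)] at this
    linarith
  · have := Nat.ceil_lt_add_one (inv_nonneg.2 (by positivity : (0 : ℝ) ≤ 4 * ν))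
    have h4 : (4 * ν)⁻¹ * ν = 1 / 4 := by field_simp
    nlinarith

lemma two_le_rpow_half_of_le {P ε : ℝ} (hε : 0 < ε) (hP : 2 ^ (2 / ε) ≤ P) : 2 ≤ P ^ (ε / 2) := by
  calc (2 : ℝ) = (2 ^ (2 / ε)) ^ (ε / 2) := by
        rw [← Real.rpow_mul (by norm_num), div_mul_div_comm, mul_comm 2 ε, div_self (by positivity),
          Real.rpow_one]
    _ ≤ P ^ (ε / 2) := by gcongr

section Peaking

variable {α : Type*} [Fintype α] {F : α → ℝ} {P : ℝ}

lemma exists_card_levelSet_peakingScale_le {a₀ : α} (ha₀ : F a₀ = 1) (hP : 1 < P)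
    (hcard : Fintype.card α ≤ P) {ε : ℝ} (hε : 0 < ε) :
    ∃ i < ⌊2 / ε⌋₊ + 1, (#(levelSet F (P ^ (-peakingScale ε i))) : ℝ) ≤
      P ^ (ε / 2) * #(levelSet F (P ^ (-peakingScale ε (i + 1)))) := by
  refine exists_le_mul_succ_of_lt_pow (h := fun i => (#(levelSet F (P ^ (-peakingScale ε i))) : ℝ))
    (by positivity) ?_ ?_
  · have hlt : P ^ (-peakingScale ε (⌊2 / ε⌋₊ + 1)) < F a₀ :=
      ha₀ ▸ Real.rpow_lt_one_of_one_lt_of_neg hP (neg_lt_zero.2 (peakingScale_pos hε _))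
    exact_mod_cast one_le_card_levelSet hlt
  · calc (#(levelSet F (P ^ (-peakingScale ε 0))) : ℝ) ≤ Fintype.card α := mod_cast card_le_univ _
      _ ≤ P ^ (1 : ℝ) := by rwa [Real.rpow_one]
      _ < P ^ (ε / 2 * (⌊2 / ε⌋₊ + 1 : ℕ)) := by
        refine Real.rpow_lt_rpow_of_exponent_lt hP ?_
        have := Nat.lt_floor_add_one (2 / ε)
        push_cast
        rw [div_lt_iff₀ hε] at this
        linarith
      _ = (P ^ (ε / 2)) ^ (⌊2 / ε⌋₊ + 1) := Real.rpow_mul_natCast (by positivity) _ _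

lemma moment_bounds_of_levelSet (hF0 : ∀ a, 0 ≤ F a) (hF1 : ∀ a, F a ≤ 1) {a₀ : α}
    (ha₀ : F a₀ = 1) (hP : 1 < P) (hcard : Fintype.card α ≤ P) {θ ν : ℝ} (hP2 : 2 ≤ P ^ (θ / 2))
    (hθ : 0 < θ) (hν : 0 < ν) (hν16 : ν ≤ 1 / 16) {k : ℕ} (hk1 : 1 ≤ 4 * k * ν)
    (hk2 : 2 * k * ν ≤ 1) :
    P ^ (-(θ / 2)) * #(levelSet F (P ^ (-(4 * θ * ν ^ 2)))) ≤ ∑ a, F a ^ (4 * k) ∧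
      ∑ a, F a ^ (4 * k) ≤ P ^ (θ / 2) * #(levelSet F (P ^ (-ν))) ∧
      P ^ (-(9 * θ)) * #(levelSet F (P ^ (-(4 * θ * ν ^ 2)))) ≤
        ∑ a, F a ^ (4 * k + 2 * k * (4 * k)) := by
  have hP0 : 0 < P := by linarith
  have hrpow_mono {x y : ℝ} (h : x ≤ y) : P ^ x ≤ P ^ y := Real.rpow_le_rpow_of_exponent_le hP.le h
  have hN : (1 : ℝ) ≤ #(levelSet F (P ^ (-ν))) := by
    have hlt : P ^ (-ν) < F a₀ := ha₀ ▸ Real.rpow_lt_one_of_one_lt_of_neg hP (neg_lt_zero.2 hν)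
    exact_mod_cast one_le_card_levelSet hlt
  refine ⟨?_, ?_, ?_⟩
  · refine le_trans ?_ (card_levelSet_le_rpow hF0 hP0 (4 * θ * ν ^ 2) (4 * k))
    rw [mul_comm]
    refine mul_le_mul_of_nonneg_left (hrpow_mono ?_) (by positivity)
    push_cast
    nlinarith [mul_le_mul_of_nonneg_left hk2 (by positivity : 0 ≤ 8 * θ * ν)]
  · calc ∑ a, F a ^ (4 * k) ≤ #(levelSet F (P ^ (-ν))) + 1 :=
          sum_pow_le_card_levelSet_add_one hF0 hF1 hP hcard (by push_cast; linarith)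
      _ ≤ 2 * #(levelSet F (P ^ (-ν))) := by linarith
      _ ≤ P ^ (θ / 2) * #(levelSet F (P ^ (-ν))) := by gcongr
  · refine le_trans ?_ (card_levelSet_le_rpow hF0 hP0 (4 * θ * ν ^ 2) _)
    rw [mul_comm]
    refine mul_le_mul_of_nonneg_left (hrpow_mono ?_) (by positivity)
    push_cast
    nlinarith [mul_le_mul_of_nonneg_left hk2 (by positivity : 0 ≤ 8 * θ * ν),
      mul_le_mul_of_nonneg_left (mul_le_mul hk2 hk2 (by positivity) zero_le_one)
        (by positivity : 0 ≤ 8 * θ)]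

end Peaking

lemma peaking_bounds_of_moment_bounds {P θ N N' M S : ℝ} (hP : 1 < P) (hθ : 0 < θ) (hN : 0 ≤ N)
    (hratio : N ≤ P ^ (θ / 2) * N') (hlower : P ^ (-(θ / 2)) * N' ≤ M)
    (hupper : M ≤ P ^ (θ / 2) * N) (hhigh : P ^ (-(9 * θ)) * N' ≤ S) :
    (P ^ (-1 - θ) * N ≤ M / P ∧ M / P ≤ P ^ (-1 + θ) * N) ∧ P ^ (-10 * θ) * M ≤ S := by
  have hP0 : 0 < P := by linarith
  have hrpow_add (x y : ℝ) : P ^ x * P ^ y = P ^ (x + y) := (Real.rpow_add hP0 x y).symm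
  refine ⟨⟨?_, ?_⟩, ?_⟩
  · rw [le_div_iff₀ hP0]
    calc P ^ (-1 - θ) * N * P ≤ P ^ (-1 - θ) * (P ^ (θ / 2) * N') * P ^ (1 : ℝ) := by
          rw [Real.rpow_one]; gcongr
      _ = P ^ (-1 - θ) * P ^ (θ / 2) * P ^ (1 : ℝ) * N' := by ring
      _ = P ^ (-(θ / 2)) * N' := by rw [hrpow_add, hrpow_add]; congr 2; ring
      _ ≤ M := hlower
  · rw [div_le_iff₀ hP0]
    calc M ≤ P ^ (θ / 2) * N := hupper
      _ ≤ P ^ (-1 + θ) * P ^ (1 : ℝ) * N := by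
          rw [hrpow_add]
          exact mul_le_mul_of_nonneg_right
            (Real.rpow_le_rpow_of_exponent_le hP.le (by linarith)) hN
      _ = P ^ (-1 + θ) * N * P := by rw [Real.rpow_one]; ring
  · calc P ^ (-10 * θ) * M ≤ P ^ (-10 * θ) * (P ^ (θ / 2) * (P ^ (θ / 2) * N')) := by
          gcongr; exact hupper.trans (by gcongr)
      _ = P ^ (-10 * θ) * P ^ (θ / 2) * P ^ (θ / 2) * N' := by ring
      _ = P ^ (-(9 * θ)) * N' := by rw [hrpow_add, hrpow_add]; congr 2; ring
      _ ≤ S := hhigh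

theorem peaking_estimates_of_card_levelSet_le {R : Type*} [CommRing R] [Fintype R]
    (ψ : AddChar R ℂ) (H : Subgroup Rˣ) [Fintype H] {P θ ν : ℝ} {k : ℕ} (hP : 1 < P)
    (hcard : Fintype.card R ≤ P) (hP2 : 2 ≤ P ^ (θ / 2)) (hθ : 0 < θ) (hν : 0 < ν)
    (hν16 : ν ≤ 1 / 16) (hk1 : 1 ≤ 4 * k * ν) (hk2 : 2 * k * ν ≤ 1)
    (hratio : (#(levelSet (‖charAvg ψ H ·‖) (P ^ (-ν))) : ℝ) ≤
      P ^ (θ / 2) * #(levelSet (‖charAvg ψ H ·‖) (P ^ (-(4 * θ * ν ^ 2))))) :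
    (P ^ (-1 - θ) * #(levelSet (‖charAvg ψ H ·‖) (P ^ (-ν))) ≤
        (∑ a, ‖charAvg ψ H a‖ ^ (4 * k)) / P ∧
      (∑ a, ‖charAvg ψ H a‖ ^ (4 * k)) / P ≤
        P ^ (-1 + θ) * #(levelSet (‖charAvg ψ H ·‖) (P ^ (-ν)))) ∧
    P ^ (-10 * θ) ≤ 1 / (∑ a, ‖charAvg ψ H a‖ ^ (4 * k)) *
      ∑ x, ∑ a, walkDensity H k x * ‖charAvg ψ H a‖ ^ (4 * k) *
        ‖charAvg ψ H (a * x)‖ ^ (4 * k) := by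
  have hF0 : ‖charAvg ψ H 0‖ = 1 := by rw [charAvg_zero, norm_one]
  obtain ⟨hlower, hupper, hhigh⟩ := moment_bounds_of_levelSet (fun _ => norm_nonneg _)
    (norm_charAvg_le_one ψ H) hF0 hP hcard hP2 hθ hν hν16 hk1 hk2
  obtain ⟨hfirst, hsecond⟩ := peaking_bounds_of_moment_bounds hP hθ (Nat.cast_nonneg _) hratio
    hlower hupper hhigh
  refine ⟨hfirst, ?_⟩
  have hM : 0 < ∑ a, ‖charAvg ψ H a‖ ^ (4 * k) :=
    calc (0 : ℝ) < ‖charAvg ψ H 0‖ ^ (4 * k) := by rw [hF0, one_pow]; exact one_pos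
      _ ≤ _ := single_le_sum (f := fun a => ‖charAvg ψ H a‖ ^ (4 * k))
          (fun _ _ => by positivity) (mem_univ 0)
  rw [one_div, ← div_eq_inv_mul, le_div_iff₀ hM]
  exact hsecond.trans (sum_norm_charAvg_pow_le H ψ k (4 * k))

lemma eChar_eq_stdAddChar (p : ℕ) [NeZero p] (x : ZMod p) : eChar p x = ZMod.stdAddChar x := by
  rw [ZMod.stdAddChar_apply, ZMod.toCircle_apply, eChar]

open scoped Classical in
/-- For every `θ > 0` there are `ν₀ > 0` and `p₀` such that for all primes `p ≥ p₀` and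
subgroups `H` of `𝔽_p^×`, there exist `ν₀ ≤ ν < θ/2` and `k ≥ 1` with (i)
`p^{-1-θ}|Λ_ν| ≤ M/p ≤ p^{-1+θ}|Λ_ν|` and (ii)
`(1/M)·∑_{x,a} ρ_k(x)|f(a)|^{4k}|f(ax)|^{4k} ≥ p^{-10θ}`, where
`f(a) = (1/|H|)∑_{s∈H} e(as/p)`, `Λ_ν = {a : |f(a)| > p^{-ν}}`, `M = ∑_a |f(a)|^{4k}`
and `ρ_k` is the density of the alternating random walk of length `2k` on `H`. -/
theorem random_walk_peaking_estimates (θ : ℝ) (hθ : 0 < θ) :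
    ∃ ν₀ : ℝ, 0 < ν₀ ∧ ∃ p₀ : ℕ,
      ∀ (p : ℕ) [Fact p.Prime], p₀ ≤ p →
        ∀ H : Subgroup (ZMod p)ˣ,
          ∃ ν : ℝ, ν₀ ≤ ν ∧ ν < θ / 2 ∧ ∃ k : ℕ, 1 ≤ k ∧
            ∀ f : ZMod p → ℂ,
              (∀ a : ZMod p, f a = (1 / (Nat.card H : ℂ)) *
                  ∑ s : H, eChar p (a * ((s : (ZMod p)ˣ) : ZMod p))) →
              ∀ Λ : Set (ZMod p),
                Λ = {a : ZMod p | (p : ℝ) ^ (-ν) < ‖f a‖} →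
              ∀ M : ℝ, M = ∑ a, ‖f a‖ ^ (4 * k) →
              ∀ ρk : ZMod p → ℝ,
                (∀ x : ZMod p, ρk x =
                  (Nat.card {s : Fin (2 * k) → H //
                      ∑ i : Fin (2 * k), (-1 : ZMod p) ^ (i : ℕ) * ((s i : (ZMod p)ˣ) : ZMod p) = x} : ℝ) /
                    (Nat.card H : ℝ) ^ (2 * k)) →
                ((p : ℝ) ^ (-1 - θ) * Λ.ncard ≤ M / p ∧
                  M / p ≤ (p : ℝ) ^ (-1 + θ) * Λ.ncard) ∧
                (p : ℝ) ^ (-10 * θ) ≤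
                  (1 / M) * ∑ x, ∑ a, ρk x *
                    ‖f a‖ ^ (4 * k) * ‖f (a * x)‖ ^ (4 * k) := by
  -- the construction needs `θ ≤ 1/4`, and the estimates for `ε ≤ θ` imply those for `θ`
  set ε := min θ (1 / 4)
  have hε : 0 < ε := lt_min hθ (by norm_num)
  have hεθ : ε ≤ θ := min_le_left _ _
  have hε4 : ε ≤ 1 / 4 := min_le_right _ _
  refine ⟨peakingScale ε (⌊2 / ε⌋₊ + 1), peakingScale_pos hε _, ⌈(2 : ℝ) ^ (2 / ε)⌉₊,
    fun p _ hp H => ?_⟩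
  have hp1 : (1 : ℝ) < p := mod_cast (Fact.out : p.Prime).one_lt
  have hcard : (Fintype.card (ZMod p) : ℝ) ≤ p := by rw [ZMod.card]
  have hp2 : 2 ≤ (p : ℝ) ^ (ε / 2) := two_le_rpow_half_of_le hε (Nat.ceil_le.1 hp)
  obtain ⟨i, hi, hratio⟩ := exists_card_levelSet_peakingScale_le
    (F := (‖charAvg ZMod.stdAddChar H ·‖)) (a₀ := 0) (by rw [charAvg_zero, norm_one]) hp1 hcard hε
  have hν : 0 < peakingScale ε i := peakingScale_pos hε i
  have hν4 : peakingScale ε i ≤ ε / 4 := peakingScale_le hε (by linarith) i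
  obtain ⟨k, hk, hk1, hk2⟩ := exists_nat_one_le_four_mul_le hν (by linarith)
  refine ⟨peakingScale ε i, peakingScale_antitone hε (by linarith) hi.le, by linarith, k, hk, ?_⟩
  rintro f hf Λ rfl M rfl ρk hρ
  obtain rfl : f = charAvg ZMod.stdAddChar H :=
    funext fun a => by simp only [hf, charAvg, one_div, eChar_eq_stdAddChar]
  obtain rfl : ρk = walkDensity H k := funext hρ
  obtain ⟨⟨hlower, hupper⟩, hpeak⟩ := peaking_estimates_of_card_levelSet_le ZMod.stdAddChar H
    hp1 hcard hp2 hε hν (by linarith) hk1 hk2 hratio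
  have hmono {x y : ℝ} (h : x ≤ y) : (p : ℝ) ^ x ≤ (p : ℝ) ^ y :=
    Real.rpow_le_rpow_of_exponent_le hp1.le h
  rw [ncard_setOf_lt]
  exact ⟨⟨le_trans (mul_le_mul_of_nonneg_right (hmono (by linarith)) (Nat.cast_nonneg _)) hlower,
    hupper.trans (mul_le_mul_of_nonneg_right (hmono (by linarith)) (Nat.cast_nonneg _))⟩,
    (hmono (by linarith)).trans hpeak⟩
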